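/- arXiv:1402.0773 — 2 statements merged into one kernel-verified Lean document; each statement's English description precedes it below -/
import Mathlib

section
/- Under the same setup, the limit polynomials T_n(x;ν) = lim_{λ→∞} S_n(x;λ,ν) satisfy ⟨𝒱, D_ν^m[T_n(x;ν)]·x^j⟩ = 0 for all j < n - m. Consequently, for all n ≥ 0, D_ν^m[T_{n+m}(x;ν)]/η_{n,m,ν} = Q_n(x), the n-th monic orthogonal polynomial of 𝒱. -/
open Polynomial Finset

/-- The forward difference operator (D_ω p)(x) = (p(x+ω)-p(x))/ω. -/
noncomputable def Dw (ω : ℝ) : Polynomial ℝ →ₗ[ℝ] Polynomial ℝ where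
  toFun p := C ω⁻¹ * (p.comp (X + C ω) - p)
  map_add' p r := by
    ext n
    simp [add_comp, coeff_C_mul, coeff_sub, coeff_add]
    ring
  map_smul' c p := by
    ext n
    simp [smul_comp, coeff_C_mul, coeff_smul, coeff_sub, smul_eq_mul]
    ring

/-- The q-derivative operator (D_q p)(x) = (p(qx)-p(x))/((q-1)x). -/
noncomputable def Dq (q : ℝ) : Polynomial ℝ →ₗ[ℝ] Polynomial ℝ where
  toFun p := C (q-1)⁻¹ * (p.comp (C q * X) - p).divX
  map_add' p r := by
    ext n
    simp [add_comp, coeff_divX, coeff_C_mul, coeff_sub, coeff_add]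
    ring
  map_smul' c p := by
    ext n
    simp [smul_comp, coeff_divX, coeff_C_mul, coeff_smul, coeff_sub, smul_eq_mul]
    ring

/-- η_{n,m,ω} = (n+1)_m. -/
noncomputable def etaW (m n : ℕ) : ℝ := ∏ k ∈ Finset.range m, ((n : ℝ) + 1 + k)

/-- η_{n,m,q} = (q^{n+1};q)_m/(1-q)^m. -/
noncomputable def etaQ (q : ℝ) (m n : ℕ) : ℝ :=
  (∏ k ∈ Finset.range m, (1 - q ^ (n + 1 + k))) / (1 - q) ^ m

/-- `D` is the difference operator D_ν, with `η n = η_{n,m,ν}` its order-`m` normalization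
constants, for ν = ω ∈ ℝ∖{0} or ν = q ∈ ℝ∖{0,±1}. -/
def NuData (D : Polynomial ℝ →ₗ[ℝ] Polynomial ℝ) (m : ℕ) (η : ℕ → ℝ) : Prop :=
  (∃ ω : ℝ, ω ≠ 0 ∧ D = Dw ω ∧ η = etaW m) ∨
  (∃ q : ℝ, q ≠ 0 ∧ q ≠ 1 ∧ q ≠ -1 ∧ D = Dq q ∧ η = etaQ q m)

/-- A positive definite linear functional. -/
def PosDef (U : Polynomial ℝ →ₗ[ℝ] ℝ) : Prop :=
  ∀ p : Polynomial ℝ, p ≠ 0 → 0 < U (p * p)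

/-- `P` is the sequence of monic orthogonal polynomials of the functional `U`. -/
def IsMOPS (U : Polynomial ℝ →ₗ[ℝ] ℝ) (P : ℕ → Polynomial ℝ) : Prop :=
  (∀ n, (P n).Monic) ∧ (∀ n, (P n).natDegree = n) ∧ ∀ n k, n ≠ k → U (P n * P k) = 0

/-- The Sobolev bilinear form ⟨p,r⟩_{λ,ν} = ⟨𝒰, pr⟩ + λ⟨𝒱, (D_ν^m p)(D_ν^m r)⟩. -/
noncomputable def sob (U V : Polynomial ℝ →ₗ[ℝ] ℝ) (lam : ℝ)
    (D : Polynomial ℝ →ₗ[ℝ] Polynomial ℝ) (m : ℕ) (p r : Polynomial ℝ) : ℝ :=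
  U (p * r) + lam * V (((D ^ m) p) * ((D ^ m) r))

/-- `S` is the monic OPS of the Sobolev inner product. -/
def IsSobMOPS (U V : Polynomial ℝ →ₗ[ℝ] ℝ) (lam : ℝ)
    (D : Polynomial ℝ →ₗ[ℝ] Polynomial ℝ) (m : ℕ) (S : ℕ → Polynomial ℝ) : Prop :=
  (∀ n, (S n).Monic) ∧ (∀ n, (S n).natDegree = n) ∧
    ∀ n k, n ≠ k → sob U V lam D m (S n) (S k) = 0

/-- The monic normalized m-th difference derivatives Pₙ^{[m,ν]} = D_ν^m P_{n+m}/η_{n,m,ν}. -/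
noncomputable def Pm (D : Polynomial ℝ →ₗ[ℝ] Polynomial ℝ) (η : ℕ → ℝ) (m : ℕ)
    (P : ℕ → Polynomial ℝ) (n : ℕ) : Polynomial ℝ :=
  C (η n)⁻¹ * ((D ^ m) (P (n + m)))

/-- (𝒰,𝒱) is an (M,N)-D_ν-coherent pair of order m, witnessed by the MOPS `P`, `Q` and
coefficients `a`, `b` (with the conventions a₀ₙ = b₀ₙ = 1, aᵢₙ = bᵢₙ = 0 for i > n). -/
def Coherent (D : Polynomial ℝ →ₗ[ℝ] Polynomial ℝ) (η : ℕ → ℝ) (m : ℕ)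
    (P Q : ℕ → Polynomial ℝ) (M N : ℕ) (a b : ℕ → ℕ → ℝ) : Prop :=
  (∀ n, a 0 n = 1) ∧ (∀ n, b 0 n = 1) ∧
  (∀ i n, n < i → a i n = 0) ∧ (∀ i n, n < i → b i n = 0) ∧
  (∀ n, M ≤ n → a M n ≠ 0) ∧ (∀ n, N ≤ n → b N n ≠ 0) ∧
  ∀ n, ∑ i ∈ Finset.range (M + 1), a i n • Pm D η m P (n - i)
      = ∑ i ∈ Finset.range (N + 1), b i n • Q (n - i)

/-!
For `λ > 0` the Sobolev polynomial `Sₙ` is orthogonal to every `r` of degree `< n`, i.e.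
`⟨𝒰, Sₙ r⟩ = -λ ⟨𝒱, D^m Sₙ · D^m r⟩`. Dividing by `λ` and letting `λ → ∞` (linear functionals
are continuous for coefficientwise convergence in bounded degree) gives
`⟨𝒱, D^m Tₙ · D^m r⟩ = 0`. As `r` ranges over polynomials of degree `< n`, `D^m r` ranges over
those of degree `< n - m`, so `D^m T_{n+m}` is a polynomial of degree `n` with leading coefficient
`η n` orthogonal to all lower degrees for `𝒱`, hence equals `η n · Qₙ`.
-/

open Filter Topology

namespace Polynomial

theorem apply_eq_zero_of_degree_lt {K M : Type*} [Field K] [AddCommGroup M] [Module K M]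
    (L : K[X] →ₗ[K] M) {P : ℕ → K[X]} (hP : ∀ k, (P k).degree = k) {N : ℕ}
    (hL : ∀ k < N, L (P k) = 0) {p : K[X]} (hp : p.degree < N) : L p = 0 := by
  let S : Sequence K := ⟨P, hP⟩
  have hspan : p ∈ Submodule.span K (P '' Set.Iio N) := by
    rw [S.span_degreeLT fun i _ => (leadingCoeff_ne_zero.2 (S.ne_zero i)).isUnit]
    exact mem_degreeLT.2 hp
  refine (Submodule.span_le (p := LinearMap.ker L)).2 ?_ hspan
  rintro _ ⟨k, hk, rfl⟩
  exact hL k hk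

theorem sum_range_coeff_smul_map_X_pow {R M : Type*} [CommSemiring R] [AddCommMonoid M]
    [Module R M] (L : R[X] →ₗ[R] M) {p : R[X]} {n : ℕ} (hp : p.natDegree ≤ n) :
    ∑ i ∈ range (n + 1), p.coeff i • L (X ^ i) = L p := by
  conv_rhs => rw [p.as_sum_range' (n + 1) (Nat.lt_succ_of_le hp)]
  simp only [map_sum, ← smul_X_eq_monomial, map_smul]

theorem tendsto_apply_of_tendsto_coeff {α R M : Type*} [CommSemiring R] [TopologicalSpace R]
    [AddCommMonoid M] [Module R M] [TopologicalSpace M] [ContinuousAdd M] [ContinuousSMul R M]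
    (L : R[X] →ₗ[R] M) {l : Filter α} {f : α → R[X]} {g : R[X]} {n : ℕ}
    (hf : ∀ᶠ a in l, (f a).natDegree ≤ n) (hg : g.natDegree ≤ n)
    (hc : ∀ i, Tendsto (fun a => (f a).coeff i) l (𝓝 (g.coeff i))) :
    Tendsto (fun a => L (f a)) l (𝓝 (L g)) := by
  rw [← sum_range_coeff_smul_map_X_pow L hg]
  refine (tendsto_finsetSum _ fun i _ => (hc i).smul_const _).congr' ?_
  filter_upwards [hf] with a ha using sum_range_coeff_smul_map_X_pow L ha

end Polynomial

def LowersDegree {R : Type*} [CommSemiring R] (D : R[X] →ₗ[R] R[X]) (s : ℕ) (c : ℕ → R) : Prop :=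
  ∀ (p : R[X]) (j : ℕ), p.natDegree ≤ j + s → (D p).coeff j = c j * p.coeff (j + s)

namespace LowersDegree

variable {R : Type*} [CommSemiring R] {D : R[X] →ₗ[R] R[X]} {s : ℕ} {c : ℕ → R}

theorem natDegree_le (hD : LowersDegree D s c) {p : R[X]} {n : ℕ} (hp : p.natDegree ≤ n + s) :
    (D p).natDegree ≤ n := by
  refine natDegree_le_iff_coeff_eq_zero.2 fun j hj => ?_
  rw [hD p j (by omega), coeff_eq_zero_of_natDegree_lt (by omega), mul_zero]

theorem pow (hD : LowersDegree D 1 c) (m : ℕ) :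
    LowersDegree (D ^ m) m fun n => ∏ k ∈ range m, c (n + k) := by
  induction m with
  | zero => intro p j _; simp
  | succ m ih =>
    intro p j hp
    rw [pow_succ, Module.End.mul_apply, ih (D p) j (hD.natDegree_le (by omega)),
      hD p (j + m) (by omega)]
    simp only [prod_range_succ, ← add_assoc, mul_assoc]

end LowersDegree

theorem coeff_Dw (ω : ℝ) (p : ℝ[X]) (j : ℕ) :
    (Dw ω p).coeff j = ω⁻¹ * ((hasseDeriv j p).eval ω - p.coeff j) := by
  change (C ω⁻¹ * (p.comp (X + C ω) - p)).coeff j = _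
  rw [coeff_C_mul, coeff_sub, ← taylor_apply, taylor_coeff]

theorem lowersDegree_Dw {ω : ℝ} (hω : ω ≠ 0) : LowersDegree (Dw ω) 1 fun j => (j : ℝ) + 1 := by
  intro p j hp
  have hlin : (hasseDeriv j p).natDegree < 2 := (natDegree_hasseDeriv_le p j).trans_lt (by omega)
  rw [coeff_Dw, eval_eq_sum_range' hlin, sum_range_succ, sum_range_one, hasseDeriv_coeff,
    hasseDeriv_coeff, zero_add, Nat.choose_self, add_comm 1 j, Nat.choose_succ_self_right]
  field_simp
  push_cast
  ring

theorem lowersDegree_Dq (q : ℝ) :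
    LowersDegree (Dq q) 1 fun j => (q - 1)⁻¹ * (q ^ (j + 1) - 1) := by
  intro p j _
  change (C (q - 1)⁻¹ * (p.comp (C q * X) - p).divX).coeff j = _
  rw [coeff_C_mul, coeff_divX, coeff_sub, comp_C_mul_X_coeff]
  ring

theorem etaQ_eq_prod {q : ℝ} (hq : q ≠ 1) (m n : ℕ) :
    etaQ q m n = ∏ k ∈ range m, (q - 1)⁻¹ * (q ^ (n + k + 1) - 1) := by
  have hq' : q - 1 ≠ 0 := sub_ne_zero.2 hq
  have hfactor : ∀ k, (q - 1)⁻¹ * (q ^ (n + k + 1) - 1) = (1 - q ^ (n + 1 + k)) / (1 - q) := by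
    intro k
    rw [add_right_comm, ← neg_sub q, div_neg, ← neg_div, neg_sub]
    field_simp
  simp only [hfactor, prod_div_distrib, prod_const, card_range, etaQ]

namespace NuData

variable {D : ℝ[X] →ₗ[ℝ] ℝ[X]} {m : ℕ} {η : ℕ → ℝ}

theorem eta_ne_zero (hν : NuData D m η) (n : ℕ) : η n ≠ 0 := by
  rcases hν with ⟨ω, -, -, rfl⟩ | ⟨q, -, hq1, hqn1, -, rfl⟩
  · exact prod_ne_zero_iff.2 fun k _ => by positivity
  · refine div_ne_zero (prod_ne_zero_iff.2 fun k _ => sub_ne_zero.2 fun h => ?_)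
      (pow_ne_zero _ (sub_ne_zero.2 hq1.symm))
    rcases (pow_eq_one_iff_of_ne_zero (by omega)).1 h.symm with h | ⟨h, -⟩
    exacts [hq1 h, hqn1 h]

theorem lowersDegree (hν : NuData D m η) : LowersDegree (D ^ m) m η := by
  rcases hν with ⟨ω, hω, rfl, rfl⟩ | ⟨q, -, hq1, -, rfl, rfl⟩
  · convert (lowersDegree_Dw hω).pow m using 1
    funext n
    refine prod_congr rfl fun k _ => ?_
    push_cast
    ring
  · convert (lowersDegree_Dq q).pow m using 1
    funext n
    exact etaQ_eq_prod hq1 m n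

end NuData

theorem IsMOPS.apply_mul_eq_zero_of_degree_lt {V : ℝ[X] →ₗ[ℝ] ℝ} {Q : ℕ → ℝ[X]}
    (hQ : IsMOPS V Q) {n : ℕ} {r : ℝ[X]} (hr : r.degree < n) : V (Q n * r) = 0 := by
  refine apply_eq_zero_of_degree_lt (V.comp (LinearMap.mulLeft ℝ (Q n)))
    (fun k => by rw [degree_eq_natDegree (hQ.1 k).ne_zero, hQ.2.1 k])
    (fun k hk => hQ.2.2 n k hk.ne') hr

theorem IsMOPS.eq_C_coeff_mul_of_orthogonal {V : ℝ[X] →ₗ[ℝ] ℝ} {Q : ℕ → ℝ[X]} (hV : PosDef V)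
    (hQ : IsMOPS V Q) {n : ℕ} {R : ℝ[X]} (hR : R.natDegree ≤ n)
    (horth : ∀ k < n, V (R * X ^ k) = 0) : R = C (R.coeff n) * Q n := by
  set p := R - C (R.coeff n) * Q n
  have hQn : (Q n).coeff n = 1 := by simpa [hQ.2.1 n] using (hQ.1 n).coeff_natDegree
  have hp : p.degree < n := by
    refine (degree_lt_iff_coeff_zero p n).2 fun k hk => ?_
    rcases hk.eq_or_lt with rfl | hk
    · simp [p, hQn]
    · rw [coeff_sub, coeff_C_mul, coeff_eq_zero_of_natDegree_lt (hR.trans_lt hk),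
        coeff_eq_zero_of_natDegree_lt ((hQ.2.1 n).trans_lt hk), mul_zero, sub_zero]
  have hpX : ∀ k < n, V (p * X ^ k) = 0 := fun k hk => by
    have hQX := hQ.apply_mul_eq_zero_of_degree_lt (r := X ^ k) (by simpa using hk)
    calc V (p * X ^ k) = V (R * X ^ k) - R.coeff n * V (Q n * X ^ k) := by
          simp only [p, sub_mul, map_sub, ← smul_eq_C_mul, smul_mul_assoc, map_smul, smul_eq_mul]
      _ = 0 := by rw [horth k hk, hQX, mul_zero, sub_zero]
  have hpp : V (p * p) = 0 :=
    apply_eq_zero_of_degree_lt (V.comp (LinearMap.mulLeft ℝ p)) (fun k => degree_X_pow k) hpX hp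
  by_contra hne
  exact (hV p (sub_ne_zero.2 hne)).ne' hpp

theorem IsSobMOPS.sob_eq_zero_of_degree_lt {U V : ℝ[X] →ₗ[ℝ] ℝ} {lam : ℝ}
    {D : ℝ[X] →ₗ[ℝ] ℝ[X]} {m : ℕ} {S : ℕ → ℝ[X]} (hS : IsSobMOPS U V lam D m S) {n : ℕ}
    {r : ℝ[X]} (hr : r.degree < n) : sob U V lam D m (S n) r = 0 :=
  apply_eq_zero_of_degree_lt (U.comp (LinearMap.mulLeft ℝ (S n)) +
      lam • (V.comp (LinearMap.mulLeft ℝ ((D ^ m) (S n)))).comp (D ^ m))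
    (fun k => by rw [degree_eq_natDegree (hS.1 k).ne_zero, hS.2.1 k])
    (fun k hk => hS.2.2 n k hk.ne') hr

theorem apply_pow_mul_pow_eq_zero_of_tendsto {U V : ℝ[X] →ₗ[ℝ] ℝ} {D : ℝ[X] →ₗ[ℝ] ℝ[X]}
    {m : ℕ} {S : ℝ → ℕ → ℝ[X]} (hS : ∀ lam : ℝ, 0 < lam → IsSobMOPS U V lam D m (S lam))
    {n : ℕ} {T : ℝ[X]} (hTdeg : T.natDegree ≤ n)
    (hT : ∀ i, Tendsto (fun lam => (S lam n).coeff i) atTop (𝓝 (T.coeff i)))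
    {r : ℝ[X]} (hr : r.degree < n) : V ((D ^ m) T * (D ^ m) r) = 0 := by
  have hSdeg : ∀ᶠ lam in atTop, (S lam n).natDegree ≤ n :=
    (eventually_gt_atTop 0).mono fun lam hlam => ((hS lam hlam).2.1 n).le
  have hU : Tendsto (fun lam => U (S lam n * r)) atTop (𝓝 (U (T * r))) :=
    tendsto_apply_of_tendsto_coeff (U.comp (LinearMap.mulRight ℝ r)) hSdeg hTdeg hT
  have hV : Tendsto (fun lam => V ((D ^ m) (S lam n) * (D ^ m) r)) atTop
      (𝓝 (V ((D ^ m) T * (D ^ m) r))) :=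
    tendsto_apply_of_tendsto_coeff ((V.comp (LinearMap.mulRight ℝ ((D ^ m) r))).comp (D ^ m))
      hSdeg hTdeg hT
  have hsob : (fun lam => -lam⁻¹ * U (S lam n * r)) =ᶠ[atTop]
      fun lam => V ((D ^ m) (S lam n) * (D ^ m) r) := by
    filter_upwards [eventually_gt_atTop 0] with lam hlam
    have h := (hS lam hlam).sob_eq_zero_of_degree_lt hr
    rw [sob] at h
    field_simp
    linarith
  have hzero : Tendsto (fun lam => -lam⁻¹ * U (S lam n * r)) atTop (𝓝 0) := by
    simpa using tendsto_inv_atTop_zero.neg.mul hU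
  exact tendsto_nhds_unique hV (hzero.congr' hsob)

theorem stmt14_general (D : Polynomial ℝ →ₗ[ℝ] Polynomial ℝ) (η : ℕ → ℝ) (m : ℕ)
    (hν : NuData D m η) (U V : Polynomial ℝ →ₗ[ℝ] ℝ)
    (hV : PosDef V) (Q : ℕ → Polynomial ℝ) (hQ : IsMOPS V Q)
    (S : ℝ → ℕ → Polynomial ℝ)
    (hS : ∀ lam : ℝ, 0 < lam → IsSobMOPS U V lam D m (S lam))
    (T : ℕ → Polynomial ℝ) (hTmonic : ∀ n, (T n).Monic) (hTdeg : ∀ n, (T n).natDegree = n)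
    (hT : ∀ n i : ℕ, Filter.Tendsto (fun lam => (S lam n).coeff i)
      Filter.atTop (nhds ((T n).coeff i))) :
    (∀ n j : ℕ, j + m < n → V (((D ^ m) (T n)) * X ^ j) = 0) ∧
      ∀ n : ℕ, (D ^ m) (T (n + m)) = C (η n) * Q n := by
  have hDm := hν.lowersDegree
  have hDX : ∀ k, ((D ^ m) (X ^ (k + m))).degree = k := fun k =>
    degree_eq_of_le_of_coeff_ne_zero
      (natDegree_le_iff_degree_le.1 (hDm.natDegree_le (natDegree_X_pow_le _)))
      (by simpa [hDm (X ^ (k + m)) k (natDegree_X_pow_le _)] using hν.eta_ne_zero k)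
  have horth : ∀ n j : ℕ, j + m < n → V ((D ^ m) (T n) * X ^ j) = 0 := fun n j hj =>
    apply_eq_zero_of_degree_lt (V.comp (LinearMap.mulLeft ℝ ((D ^ m) (T n)))) hDX (N := n - m)
      (fun k hk => apply_pow_mul_pow_eq_zero_of_tendsto hS (hTdeg n).le (hT n)
        (by rw [degree_X_pow]; exact_mod_cast (by omega : k + m < n)))
      (by rw [degree_X_pow]; exact_mod_cast (by omega : j < n - m))
  refine ⟨horth, fun n => ?_⟩
  have hlead : ((D ^ m) (T (n + m))).coeff n = η n := by
    have hTlead : (T (n + m)).coeff (n + m) = 1 := by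
      simpa [hTdeg] using (hTmonic (n + m)).coeff_natDegree
    rw [hDm _ n (hTdeg _).le, hTlead, mul_one]
  rw [← hlead]
  exact hQ.eq_C_coeff_mul_of_orthogonal hV (hDm.natDegree_le (hTdeg _).le)
    fun k hk => horth _ _ (by omega)

/-- the limit polynomials Tₙ(x;ν) = lim_{λ→∞} Sₙ(x;λ,ν) satisfy
⟨𝒱, D_ν^m[Tₙ]·xʲ⟩ = 0 for j < n-m; consequently D_ν^m[T_{n+m}]/η_{n,m,ν} = Qₙ,
the n-th monic orthogonal polynomial of 𝒱. -/
theorem stmt14 (D : Polynomial ℝ →ₗ[ℝ] Polynomial ℝ) (η : ℕ → ℝ) (m : ℕ)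
    (hν : NuData D m η) (hm : 1 ≤ m) (U V : Polynomial ℝ →ₗ[ℝ] ℝ)
    (hU : PosDef U) (hV : PosDef V) (Q : ℕ → Polynomial ℝ) (hQ : IsMOPS V Q)
    (S : ℝ → ℕ → Polynomial ℝ)
    (hS : ∀ lam : ℝ, 0 < lam → IsSobMOPS U V lam D m (S lam))
    (T : ℕ → Polynomial ℝ) (hTmonic : ∀ n, (T n).Monic) (hTdeg : ∀ n, (T n).natDegree = n)
    (hT : ∀ n i : ℕ, Filter.Tendsto (fun lam => (S lam n).coeff i)
      Filter.atTop (nhds ((T n).coeff i))) :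
    (∀ n j : ℕ, j + m < n → V (((D ^ m) (T n)) * X ^ j) = 0) ∧
      ∀ n : ℕ, (D ^ m) (T (n + m)) = C (η n) * Q n :=
  stmt14_general D η m hν U V hV Q hQ S hS T hTmonic hTdeg hT
end

section
/- Let (𝒰,𝒱) be an (M,N)-D_ν-coherent pair of order m: the monic OPS {P_n} of 𝒰 and {Q_n} of 𝒱 satisfy P_n^{[m,ν]}(x) + Σ_{i=1}^{M} a_{i,n} P_{n-i}^{[m,ν]}(x) = Q_n(x) + Σ_{i=1}^{N} b_{i,n} Q_{n-i}(x) for n ≥ 0. Let {S_n(x;λ,ν)} be the monic OPS of the Sobolev inner product ⟨p,r⟩_{λ,ν} = ⟨𝒰, pr⟩ + λ⟨𝒱, (D_ν^m p)(D_ν^m r)⟩ and K = max{M,N}. Then there exist constants c_{j,n,λ,ν} (1 ≤ j ≤ K, with c_{j,n,λ,ν} = 0 for n < j) such that P_{n+m}(x) + Σ_{i=1}^{M} (η_{n,m,ν} a_{i,n}/η_{n-i,m,ν}) P_{n-i+m}(x) = S_{n+m}(x;λ,ν) + Σ_{j=1}^{K} c_{j,n,λ,ν} S_{n-j+m}(x;λ,ν)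 for all n ≥ 0. -/
/-!
Let `F n` be the left-hand side. It is monic of degree `n + m`, and the coherence relation gives
`D_ν^m (F n) = η_n ∑ b_{i,n} Q_{n-i}`. Hence `F n` is `𝒰`-orthogonal to all polynomials of degree
`< n - M + m`, while `D_ν^m (F n)` is `𝒱`-orthogonal to all polynomials of degree `< n - N`.
Since `D_ν` lowers degrees, `F n` is orthogonal for the Sobolev form to every `S k` with
`k < n - max M N + m`. Expanding `F n - S (n + m)` in `S 0, …, S (n + m - 1)`, the coefficients
of these `S k` therefore vanish, the Sobolev form being positive definite. With truncated
subtraction the bound is `m` when `n < max M N`, which accounts for `c_{j,n} = 0` for `j > n`: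
there `D_ν^m (S k) = 0`.
-/

open Polynomial Finset

namespace Polynomial

variable {R : Type*}

def LowersDegree [Semiring R] (D : R[X] →ₗ[R] R[X]) : Prop :=
  ∀ n : ℕ, ∀ p ∈ degreeLE R n, D p ∈ degreeLT R n

theorem LowersDegree.pow_apply_mem_degreeLT [Semiring R] {D : R[X] →ₗ[R] R[X]}
    (hD : LowersDegree D) (j : ℕ) {n : ℕ} {p : R[X]} (hp : p ∈ degreeLT R (n + j)) :
    (D ^ j) p ∈ degreeLT R n := by
  induction j generalizing p with
  | zero => simpa using hp
  | succ j ih =>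
    rw [← add_assoc, degreeLT_succ_eq_degreeLE] at hp
    rw [pow_succ, Module.End.mul_apply]
    exact ih (hD _ p hp)

theorem Monic.sub_mem_degreeLT [Ring R] [Nontrivial R] {p q : R[X]} {d : ℕ} (hp : p.Monic)
    (hq : q.Monic) (hpd : p.natDegree = d) (hqd : q.natDegree = d) : p - q ∈ degreeLT R d := by
  have hdeg : p.degree = d := by rw [degree_eq_natDegree hp.ne_zero, hpd]
  refine mem_degreeLT.2 ((degree_sub_lt_left ?_ hp.ne_zero ?_).trans_eq hdeg)
  · rw [hdeg, degree_eq_natDegree hq.ne_zero, hqd]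
  · rw [hp.leadingCoeff, hq.leadingCoeff]

theorem Monic.mem_degreeLT [Semiring R] [Nontrivial R] {p : R[X]} {n : ℕ} (hp : p.Monic)
    (h : p.natDegree < n) : p ∈ degreeLT R n :=
  Polynomial.mem_degreeLT.2 ((natDegree_lt_iff_degree_lt hp.ne_zero).1 h)

theorem span_image_Iio_eq_degreeLT [Ring R] [Nontrivial R] {T : ℕ → R[X]}
    (hmon : ∀ k, (T k).Monic) (hdeg : ∀ k, (T k).natDegree = k) (n : ℕ) :
    Submodule.span R (T '' Set.Iio n) = degreeLT R n :=
  Sequence.span_degreeLT ⟨T, fun k => by rw [degree_eq_natDegree (hmon k).ne_zero, hdeg]⟩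
    (fun k _ => by simp [(hmon k).leadingCoeff])

theorem exists_sum_smul_eq_of_mem_degreeLT [Ring R] [Nontrivial R] {T : ℕ → R[X]}
    (hmon : ∀ k, (T k).Monic) (hdeg : ∀ k, (T k).natDegree = k) {n : ℕ} {p : R[X]}
    (hp : p ∈ degreeLT R n) : ∃ d : ℕ → R, ∑ k ∈ range n, d k • T k = p := by
  rw [← span_image_Iio_eq_degreeLT hmon hdeg, ← coe_range] at hp
  exact (Submodule.mem_span_image_finset_iff_exists_fun' R).1 hp

theorem lowersDegree_Dw (ω : ℝ) : LowersDegree (Dw ω) := by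
  intro n p hp
  change C ω⁻¹ * (p.comp (X + C ω) - p) ∈ degreeLT ℝ n
  rw [← smul_eq_C_mul, ← taylor_apply]
  refine Submodule.smul_mem _ _ (mem_degreeLT.2 ?_)
  rcases eq_or_ne p 0 with rfl | hp0
  · simp
  refine (degree_sub_lt_left (degree_taylor p ω) ?_ (leadingCoeff_taylor ω p)).trans_le ?_
  · rwa [Ne, taylor_eq_zero]
  · rw [degree_taylor]
    exact mem_degreeLE.1 hp

theorem lowersDegree_Dq (q : ℝ) : LowersDegree (Dq q) := by
  intro n p hp
  rw [mem_degreeLE, degree_le_iff_coeff_zero] at hp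
  rw [Polynomial.mem_degreeLT, degree_lt_iff_coeff_zero]
  intro k hk
  have hp' : p.coeff (k + 1) = 0 := hp _ (by exact_mod_cast Nat.lt_succ_of_le hk)
  simp [Dq, coeff_C_mul, coeff_divX, hp']

end Polynomial

theorem NuData.lowersDegree_s15 {D : ℝ[X] →ₗ[ℝ] ℝ[X]} {m : ℕ} {η : ℕ → ℝ} (hν : NuData D m η) :
    LowersDegree D := by
  rcases hν with ⟨ω, -, rfl, -⟩ | ⟨q, -, -, -, rfl, -⟩
  · exact lowersDegree_Dw ω
  · exact lowersDegree_Dq q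

theorem NuData.eta_ne_zero_s15 {D : ℝ[X] →ₗ[ℝ] ℝ[X]} {m : ℕ} {η : ℕ → ℝ} (hν : NuData D m η)
    (n : ℕ) : η n ≠ 0 := by
  rcases hν with ⟨ω, -, -, rfl⟩ | ⟨q, -, hq1, hqm1, -, rfl⟩
  · exact Finset.prod_ne_zero_iff.2 fun k _ => by positivity
  · refine div_ne_zero (Finset.prod_ne_zero_iff.2 fun k _ => ?_)
      (pow_ne_zero _ (sub_ne_zero.2 hq1.symm))
    intro h
    rcases pow_eq_one_iff_cases.1 (sub_eq_zero.1 h).symm with h | h | ⟨h, -⟩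
    exacts [by omega, hq1 h, hqm1 h]

theorem PosDef.apply_mul_self_nonneg {U : ℝ[X] →ₗ[ℝ] ℝ} (hU : PosDef U) (p : ℝ[X]) :
    0 ≤ U (p * p) := by
  rcases eq_or_ne p 0 with rfl | hp
  · simp
  · exact (hU p hp).le

theorem IsMOPS.apply_mul_eq_zero_of_mem_degreeLT {U : ℝ[X] →ₗ[ℝ] ℝ} {P : ℕ → ℝ[X]}
    (hP : IsMOPS U P) {n : ℕ} {r : ℝ[X]} (hr : r ∈ degreeLT ℝ n) : U (P n * r) = 0 := by
  obtain ⟨hmon, hdeg, horth⟩ := hP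
  rw [← span_image_Iio_eq_degreeLT hmon hdeg] at hr
  suffices Submodule.span ℝ (P '' Set.Iio n) ≤ LinearMap.ker (U ∘ₗ LinearMap.mulLeft ℝ (P n)) from
    this hr
  rw [Submodule.span_le]
  rintro _ ⟨k, hk, rfl⟩
  exact horth n k (Set.mem_Iio.1 hk).ne'

noncomputable def sobForm (U V : ℝ[X] →ₗ[ℝ] ℝ) (lam : ℝ) (D : ℝ[X] →ₗ[ℝ] ℝ[X]) (m : ℕ) :
    LinearMap.BilinForm ℝ ℝ[X] :=
  (LinearMap.mul ℝ ℝ[X]).compr₂ U +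
    lam • ((LinearMap.mul ℝ ℝ[X]).compl₁₂ (D ^ m) (D ^ m)).compr₂ V

theorem sobForm_apply (U V : ℝ[X] →ₗ[ℝ] ℝ) (lam : ℝ) (D : ℝ[X] →ₗ[ℝ] ℝ[X]) (m : ℕ)
    (p r : ℝ[X]) : sobForm U V lam D m p r = sob U V lam D m p r :=
  rfl

theorem sob_self_pos {U V : ℝ[X] →ₗ[ℝ] ℝ} (hU : PosDef U) (hV : PosDef V) {lam : ℝ}
    (hlam : 0 ≤ lam) (D : ℝ[X] →ₗ[ℝ] ℝ[X]) (m : ℕ) {p : ℝ[X]} (hp : p ≠ 0) :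
    0 < sob U V lam D m p p :=
  add_pos_of_pos_of_nonneg (hU p hp) (mul_nonneg hlam (hV.apply_mul_self_nonneg _))

theorem LinearMap.BilinForm.coeff_eq_zero_of_iIsOrtho {K V ι : Type*} [Field K] [AddCommGroup V]
    [Module K V] {B : LinearMap.BilinForm K V} {v : ι → V} (hv : B.iIsOrtho v) {s : Finset ι}
    {w : ι → K} {i : ι} (hi : i ∈ s) (hvi : B (v i) (v i) ≠ 0)
    (h : B (∑ j ∈ s, w j • v j) (v i) = 0) : w i = 0 := by
  have hsum : ∑ j ∈ s, w j * B (v j) (v i) = w i * B (v i) (v i) :=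
    Finset.sum_eq_single_of_mem i hi fun j _ hji => by
      rw [LinearMap.BilinForm.iIsOrtho_def.1 hv j i hji, mul_zero]
  simp_rw [LinearMap.BilinForm.sum_left, LinearMap.BilinForm.smul_left, hsum] at h
  exact eq_zero_of_ne_zero_of_mul_right_eq_zero hvi h

theorem Finset.sum_range_add_eq_sum_Icc {X : Type*} [AddCommMonoid X] {f : ℕ → X} {n m K : ℕ}
    (hf : ∀ k < n - K + m, f k = 0) :
    ∑ k ∈ range (n + m), f k = ∑ j ∈ Icc 1 K, if j ≤ n then f (n - j + m) else 0 := by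
  have hle : ∀ j, (if j ≤ n then f (n - j + m) else 0) ≠ 0 → j ≤ n :=
    fun j hne => by_contra fun h => hne (if_neg h)
  symm
  refine Finset.sum_bij_ne_zero (fun j _ _ => n - j + m) ?_ ?_ ?_ ?_
  · intro j hj hne
    have := hle j hne
    simp only [mem_Icc] at hj
    simp only [mem_range]
    omega
  · intro j₁ hj₁ hne₁ j₂ hj₂ hne₂ h
    have := hle j₁ hne₁
    have := hle j₂ hne₂
    simp only [mem_Icc] at hj₁ hj₂
    omega
  · intro k hk hne
    have : n - K + m ≤ k := by by_contra h; exact hne (hf k (by omega))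
    simp only [mem_range] at hk
    refine ⟨n + m - k, by simp only [mem_Icc]; omega, ?_, by omega⟩
    rwa [if_pos (by omega), show n - (n + m - k) + m = k by omega]
  · intro j _ hne
    rw [if_pos (hle j hne)]

section Coherent

variable {D : ℝ[X] →ₗ[ℝ] ℝ[X]} {η : ℕ → ℝ} {m M N n : ℕ} {P Q : ℕ → ℝ[X]} {a b : ℕ → ℕ → ℝ}

noncomputable def coherentCombination (η : ℕ → ℝ) (a : ℕ → ℕ → ℝ) (P : ℕ → ℝ[X]) (m M n : ℕ) :
    ℝ[X] :=
  ∑ i ∈ range (M + 1), (η n / η (n - i) * a i n) • P (n - i + m)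

theorem coherentCombination_eq (ha0 : a 0 n = 1) (hη : η n ≠ 0) :
    coherentCombination η a P m M n =
      P (n + m) + ∑ i ∈ Icc 1 M, (η n / η (n - i) * a i n) • P (n - i + m) := by
  rw [coherentCombination, range_eq_Ico, sum_eq_sum_Ico_succ_bot (Nat.succ_pos M), zero_add,
    Nat.succ_eq_add_one, Ico_add_one_right_eq_Icc, Nat.sub_zero, ha0, div_self hη, one_mul,
    one_smul]

theorem coherentCombination_sub_mem_degreeLT (hmon : ∀ k, (P k).Monic)
    (hdeg : ∀ k, (P k).natDegree = k) (ha0 : a 0 n = 1) (haz : ∀ i, n < i → a i n = 0)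
    (hη : η n ≠ 0) {T : ℝ[X]} (hT : T.Monic) (hTd : T.natDegree = n + m) :
    coherentCombination η a P m M n - T ∈ degreeLT ℝ (n + m) := by
  rw [coherentCombination_eq ha0 hη, add_sub_right_comm]
  refine add_mem ((hmon _).sub_mem_degreeLT hT (hdeg _) hTd) (sum_mem fun i hi => ?_)
  rcases le_or_gt i n with hin | hin
  · have hi := mem_Icc.1 hi
    exact Submodule.smul_mem _ _ ((hmon _).mem_degreeLT (by rw [hdeg]; omega))
  · rw [haz i hin, mul_zero, zero_smul]
    exact zero_mem _

theorem pow_apply_coherentCombination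
    (hrel : ∑ i ∈ range (M + 1), a i n • Pm D η m P (n - i)
      = ∑ i ∈ range (N + 1), b i n • Q (n - i)) :
    (D ^ m) (coherentCombination η a P m M n) = η n • ∑ i ∈ range (N + 1), b i n • Q (n - i) := by
  rw [coherentCombination, map_sum, ← hrel, smul_sum]
  refine sum_congr rfl fun i _ => ?_
  rw [Pm, ← smul_eq_C_mul, map_smul, smul_smul, smul_smul]
  congr 1
  ring

theorem apply_coherentCombination_mul_eq_zero {U : ℝ[X] →ₗ[ℝ] ℝ} (hP : IsMOPS U P)
    (haz : ∀ i, n < i → a i n = 0) {r : ℝ[X]} (hr : r ∈ degreeLT ℝ (n - M + m)) :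
    U (coherentCombination η a P m M n * r) = 0 := by
  rw [coherentCombination, sum_mul, map_sum]
  refine sum_eq_zero fun i hi => ?_
  rw [smul_mul_assoc, map_smul]
  have hi := mem_range.1 hi
  rcases le_or_gt i n with hin | hin
  · rw [hP.apply_mul_eq_zero_of_mem_degreeLT (degreeLT_mono (by omega) hr),
      smul_zero]
  · rw [haz i hin, mul_zero, zero_smul]

theorem sob_coherentCombination_eq_zero (hD : LowersDegree D) {U V : ℝ[X] →ₗ[ℝ] ℝ} (lam : ℝ)
    (hP : IsMOPS U P) (hQ : IsMOPS V Q) (hcoh : Coherent D η m P Q M N a b) {r : ℝ[X]}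
    (hr : r ∈ degreeLT ℝ (n - max M N + m)) :
    sob U V lam D m (coherentCombination η a P m M n) r = 0 := by
  obtain ⟨-, -, haz, hbz, -, -, hrel⟩ := hcoh
  have hUpart : U (coherentCombination η a P m M n * r) = 0 :=
    apply_coherentCombination_mul_eq_zero hP (haz · n) (degreeLT_mono (by omega) hr)
  have hDr : (D ^ m) r ∈ degreeLT ℝ (n - max M N) := hD.pow_apply_mem_degreeLT m hr
  have hVpart : V ((D ^ m) (coherentCombination η a P m M n) * (D ^ m) r) = 0 := by
    rw [pow_apply_coherentCombination (hrel n), smul_mul_assoc, map_smul, sum_mul, map_sum]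
    refine smul_eq_zero_of_right _ (sum_eq_zero fun i hi => ?_)
    rw [smul_mul_assoc, map_smul]
    have hi := mem_range.1 hi
    rcases le_or_gt i n with hin | hin
    · rw [hQ.apply_mul_eq_zero_of_mem_degreeLT (degreeLT_mono (by omega) hDr),
        smul_zero]
    · rw [hbz i n hin, zero_smul]
  rw [sob, hUpart, hVpart, mul_zero, add_zero]

theorem exists_coherentCombination_eq_add_sum (hD : LowersDegree D) {U V : ℝ[X] →ₗ[ℝ] ℝ}
    (hU : PosDef U) (hV : PosDef V) {lam : ℝ} (hlam : 0 ≤ lam) {S : ℕ → ℝ[X]}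
    (hP : IsMOPS U P) (hQ : IsMOPS V Q) (hS : IsSobMOPS U V lam D m S)
    (hcoh : Coherent D η m P Q M N a b) (hη : η n ≠ 0) :
    ∃ c : ℕ → ℝ, (∀ j, n < j → c j = 0) ∧
      coherentCombination η a P m M n = S (n + m) + ∑ j ∈ Icc 1 (max M N), c j • S (n - j + m) := by
  obtain ⟨hSmon, hSdeg, hSorth⟩ := hS
  obtain ⟨d, hd⟩ := exists_sum_smul_eq_of_mem_degreeLT hSmon hSdeg
    (coherentCombination_sub_mem_degreeLT (M := M) hP.1 hP.2.1 (hcoh.1 n) (hcoh.2.2.1 · n) hη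
      (hSmon (n + m)) (hSdeg (n + m)))
  have hd0 : ∀ k < n - max M N + m, d k • S k = 0 := by
    intro k hk
    refine smul_eq_zero_of_left (LinearMap.BilinForm.coeff_eq_zero_of_iIsOrtho
      (B := sobForm U V lam D m) hSorth (s := range (n + m)) (mem_range.2 (by omega))
      (sob_self_pos hU hV hlam D m (hSmon k).ne_zero).ne' ?_) _
    rw [hd, map_sub, LinearMap.sub_apply, sobForm_apply, sobForm_apply,
      sob_coherentCombination_eq_zero hD lam hP hQ hcoh
        ((hSmon k).mem_degreeLT (by rw [hSdeg]; exact hk)),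
      hSorth _ _ (by omega), sub_zero]
  refine ⟨fun j => if j ≤ n then d (n - j + m) else 0, fun j hj => if_neg (by omega), ?_⟩
  rw [← sub_eq_iff_eq_add', ← hd, sum_range_add_eq_sum_Icc hd0]
  exact sum_congr rfl fun j _ => by rw [ite_smul, zero_smul]

end Coherent

theorem stmt15_general (D : Polynomial ℝ →ₗ[ℝ] Polynomial ℝ) (η : ℕ → ℝ) (m : ℕ)
    (hν : NuData D m η) (lam : ℝ) (hlam : 0 < lam)
    (U V : Polynomial ℝ →ₗ[ℝ] ℝ) (hU : PosDef U) (hV : PosDef V)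
    (P Q S : ℕ → Polynomial ℝ) (hP : IsMOPS U P) (hQ : IsMOPS V Q)
    (hS : IsSobMOPS U V lam D m S)
    (M N : ℕ) (a b : ℕ → ℕ → ℝ) (hcoh : Coherent D η m P Q M N a b) :
    ∃ c : ℕ → ℕ → ℝ, (∀ j n : ℕ, n < j → c j n = 0) ∧
      ∀ n : ℕ,
        P (n + m) + ∑ i ∈ Finset.Icc 1 M, (η n / η (n - i) * a i n) • P (n - i + m)
          = S (n + m) + ∑ j ∈ Finset.Icc 1 (max M N), c j n • S (n - j + m) := by
  choose c hc_zero hc using fun n => exists_coherentCombination_eq_add_sum (n := n)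
    hν.lowersDegree_s15 hU hV hlam.le hP hQ hS hcoh (hν.eta_ne_zero_s15 n)
  refine ⟨fun j n => c n j, fun j n h => hc_zero n j h, fun n => ?_⟩
  rw [← coherentCombination_eq (hcoh.1 n) (hν.eta_ne_zero_s15 n)]
  exact hc n

/-- for an (M,N)-D_ν-coherent pair of order m of positive definite
functionals, there are constants c_{j,n,λ,ν} (vanishing for n < j) such that
P_{n+m} + Σ_{i=1}^M (η_{n}a_{i,n}/η_{n-i}) P_{n-i+m}
  = S_{n+m} + Σ_{j=1}^{max{M,N}} c_{j,n,λ,ν} S_{n-j+m} for all n ≥ 0. -/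
theorem stmt15 (D : Polynomial ℝ →ₗ[ℝ] Polynomial ℝ) (η : ℕ → ℝ) (m : ℕ)
    (hν : NuData D m η) (hm : 1 ≤ m) (lam : ℝ) (hlam : 0 < lam)
    (U V : Polynomial ℝ →ₗ[ℝ] ℝ) (hU : PosDef U) (hV : PosDef V)
    (P Q S : ℕ → Polynomial ℝ) (hP : IsMOPS U P) (hQ : IsMOPS V Q)
    (hS : IsSobMOPS U V lam D m S)
    (M N : ℕ) (a b : ℕ → ℕ → ℝ) (hcoh : Coherent D η m P Q M N a b) :
    ∃ c : ℕ → ℕ → ℝ, (∀ j n : ℕ, n < j → c j n = 0) ∧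
      ∀ n : ℕ,
        P (n + m) + ∑ i ∈ Finset.Icc 1 M, (η n / η (n - i) * a i n) • P (n - i + m)
          = S (n + m) + ∑ j ∈ Finset.Icc 1 (max M N), c j n • S (n - j + m) :=
  stmt15_general D η m hν lam hlam U V hU hV P Q S hP hQ hS M N a b hcoh
end
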